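/- arXiv:1107.3658 — 2 statements merged into one kernel-verified Lean document; each statement's English description precedes it below -/
import Mathlib

section
/- Let G be a graph, let T be a tree decomposition of G of width w, and let S ⊆ V(G). Then there exists a superset S' ⊇ S of size at most 2(w+1)·|S| such that for every connected component C of G − S' it holds that |N_G(C) ∩ S'| ≤ 2w. -/
set_option maxHeartbeats 1000000

variable {V : Type}

/-- The graph obtained from `G` by deleting the vertex set `S`
(deleted vertices are kept as isolated vertices). -/
def gdelete (G : SimpleGraph V) (S : Set V) : SimpleGraph V where
  Adj u v := G.Adj u v ∧ u ∉ S ∧ v ∉ S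
  symm := by constructor; intro u v h; exact ⟨h.1.symm, h.2.2, h.2.1⟩
  loopless := by constructor; intro v h; exact G.irrefl h.1

/-- The subgraph of `G` induced by the vertex set `A`
(vertices outside `A` are kept as isolated vertices). -/
def grestrict (G : SimpleGraph V) (A : Set V) : SimpleGraph V := gdelete G Aᶜ

/-- The open neighborhood `N_G(C)` of a vertex set `C`. -/
def gnbhd (G : SimpleGraph V) (C : Set V) : Set V := {v | v ∉ C ∧ ∃ u ∈ C, G.Adj u v}

/-- `C` is (the vertex set of) a connected component of the induced subgraph `G[A]`:
`C ⊆ A`, `C` is nonempty and connected, and `C` is closed under adjacency within `A`. -/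
def IsCompOf (G : SimpleGraph V) (A C : Set V) : Prop :=
  C ⊆ A ∧ C.Nonempty ∧ (∀ u ∈ C, ∀ v ∈ C, (grestrict G C).Reachable u v) ∧
    ∀ u ∈ C, ∀ v ∈ A, G.Adj u v → v ∈ C

/-- `(T, bag)` is a tree decomposition of `G`. -/
def IsTreeDecomp {ι : Type} (G : SimpleGraph V) (T : SimpleGraph ι) (bag : ι → Set V) :
    Prop :=
  T.IsTree ∧ (∀ v : V, ∃ i, v ∈ bag i) ∧
    (∀ u v : V, G.Adj u v → ∃ i, u ∈ bag i ∧ v ∈ bag i) ∧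
    ∀ v : V, (T.induce {i | v ∈ bag i}).Connected

/-!
Add the vertices of `S` one at a time, keeping the invariant that for every component `C` of
`G - S'` the set `N(C) ∩ S'` is covered by two sets of at most `w` vertices, each inside a bag.
To add `a`, let `C` be its component, covered inside the bags `t₁` and `t₂`, and let `tₐ` be a bag
containing `a`. Choose a median `c` of `t₁, t₂, tₐ` in the tree and add `a` and `bag c ∩ C` to
`S'`: at most `w + 2` new vertices. A new component `C' ⊆ C` avoids `bag c`, so its bags lie on one
side of `c`. Its neighbours in `bag c` survive up to the first edge `de` with `bag d ≠ bag e` on the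
way from `c` towards `C'`, so they lie in `bag d ∩ bag e`, of size at most `w`; the rest of its
boundary lies in whichever of the old pieces `A₁`, `A₂`, `{a}` is on its side of `c`, and a median
leaves at most one of them there. Components outside `C` are components of `G - S` with the same
boundary. When `w = 0` the graph has no edges and `S' = S` works.
-/

namespace SimpleGraph

variable {ι : Type*} {T : SimpleGraph ι} {c d x y z : ι}

def Separates (T : SimpleGraph ι) (c x y : ι) : Prop := ∀ p : T.Walk x y, c ∈ p.support

lemma separates_left : T.Separates x x y := fun p => p.start_mem_support

lemma not_separates_iff : ¬ T.Separates c x y ↔ ∃ p : T.Walk x y, c ∉ p.support := not_forall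

lemma Separates.symm (h : T.Separates c x y) : T.Separates c y x := fun p => by
  simpa using h p.reverse

lemma separates_comm : T.Separates c x y ↔ T.Separates c y x := ⟨.symm, .symm⟩

lemma not_separates_trans (hxy : ¬ T.Separates c x y) (hyz : ¬ T.Separates c y z) :
    ¬ T.Separates c x z := by
  obtain ⟨p, hp⟩ := not_separates_iff.mp hxy
  obtain ⟨q, hq⟩ := not_separates_iff.mp hyz
  exact not_separates_iff.mpr ⟨p.append q, by simp [Walk.mem_support_append_iff, hp, hq]⟩

lemma Separates.of_adj (hxd : T.Adj x d) (hcd : c ≠ d) (h : T.Separates c d y) :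
    T.Separates c x y := fun p => by
  simpa [hcd] using h (.cons hxd.symm p)

lemma IsAcyclic.separates_of_adj (hT : T.IsAcyclic) (hcd : T.Adj c d)
    (hd : ¬ T.Separates c d x) : T.Separates d c x := by
  intro r
  by_contra hdr
  obtain ⟨s, hs⟩ := not_separates_iff.mp hd
  -- `r` and `s` join `c` to `d` without using the bridge `cd`.
  have hbridge := isBridge_iff_forall_walk_mem_edges.mp
    (isAcyclic_iff_forall_adj_isBridge.mp hT hcd) (r.append s.reverse)
  rw [Walk.edges_append, Walk.edges_reverse, List.mem_append, List.mem_reverse] at hbridge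
  rcases hbridge with h | h
  · exact hdr (r.snd_mem_support_of_mem_edges h)
  · exact hs (s.fst_mem_support_of_mem_edges h)

lemma IsAcyclic.exists_median_of_isPath (hT : T.IsAcyclic) (z : ι) :
    ∀ {x y : ι} (p : T.Walk x y), p.IsPath →
      ∃ c, T.Separates c x y ∧ T.Separates c x z ∧ T.Separates c y z
  | x, _, .nil, _ => ⟨x, separates_left, separates_left, separates_left⟩
  | x, y, .cons (v := d) hxd q, hp => by
    rw [Walk.cons_isPath_iff] at hp
    by_cases hxyz : T.Separates x y z
    · exact ⟨x, separates_left, separates_left, hxyz⟩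
    obtain ⟨c, hdy, hdz, hyz⟩ := hT.exists_median_of_isPath z q hp.1
    have hxdy : ¬ T.Separates x d y := not_separates_iff.mpr ⟨q, hp.2⟩
    by_cases hcd : c = d
    · subst hcd
      exact ⟨c, hT.separates_of_adj hxd hxdy,
        hT.separates_of_adj hxd (not_separates_trans hxdy hxyz), hyz⟩
    · exact ⟨c, hdy.of_adj hxd hcd, hdz.of_adj hxd hcd, hyz⟩

lemma IsTree.exists_median (hT : T.IsTree) (x y z : ι) :
    ∃ c, T.Separates c x y ∧ T.Separates c x z ∧ T.Separates c y z := by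
  classical
  obtain ⟨p⟩ := hT.connected.preconnected x y
  exact hT.isAcyclic.exists_median_of_isPath z p.bypass p.bypass_isPath

lemma eq_empty_or_exists_subset_of_pairwise_separates {κ α : Type*} {t : κ → ι}
    {A : κ → Set α} {Y : Set α} (hsep : Pairwise fun i k => T.Separates c (t i) (t k))
    (hY : Y ⊆ ⋃ i, A i) (hj : ∀ i, ∀ v ∈ Y, v ∈ A i → ¬ T.Separates c (t i) y) :
    Y = ∅ ∨ ∃ i, Y ⊆ A i := by
  rcases Y.eq_empty_or_nonempty with hY₀ | ⟨v, hv⟩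
  · exact .inl hY₀
  obtain ⟨i, hvi⟩ := Set.mem_iUnion.mp (hY hv)
  refine .inr ⟨i, fun v' hv' => ?_⟩
  obtain ⟨k, hv'k⟩ := Set.mem_iUnion.mp (hY hv')
  obtain rfl : i = k := by
    by_contra hik
    exact not_separates_trans (hj i v hv hvi) (separates_comm.not.mp (hj k v' hv' hv'k)) (hsep hik)
  exact hv'k

end SimpleGraph

open SimpleGraph

section TreeDecomp

variable {ι : Type} {G : SimpleGraph V} {T : SimpleGraph ι} {bag : ι → Set V}

lemma IsTreeDecomp.mem_bag_of_separates (hdec : IsTreeDecomp G T bag) {v : V} {x y c : ι}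
    (hx : v ∈ bag x) (hy : v ∈ bag y) (hc : T.Separates c x y) : v ∈ bag c := by
  obtain ⟨p⟩ := (hdec.2.2.2 v).preconnected ⟨x, hx⟩ ⟨y, hy⟩
  obtain ⟨j, -, rfl⟩ := List.mem_map.mp <| Walk.support_map _ p ▸
    hc (p.map (Embedding.induce {i | v ∈ bag i}).toHom)
  exact j.2

lemma IsTreeDecomp.not_separates_of_walk (hdec : IsTreeDecomp G T bag) {W : Set V} {c : ι}
    (hW : Disjoint W (bag c)) {u u' : V} (p : (grestrict G W).Walk u u') (hu : u ∈ W)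
    {j j' : ι} (hj : u ∈ bag j) (hj' : u' ∈ bag j') : ¬ T.Separates c j j' := by
  induction p generalizing j with
  | nil => exact fun hsep => Set.disjoint_left.mp hW hu (hdec.mem_bag_of_separates hj hj' hsep)
  | cons h q ih =>
    obtain ⟨k, hak, hbk⟩ := hdec.2.2.1 _ _ h.1
    exact not_separates_trans
      (fun hsep => Set.disjoint_left.mp hW hu (hdec.mem_bag_of_separates hj hak hsep))
      (ih (Set.notMem_compl_iff.mp h.2.2) hbk hj')

/-- Walk from `c` towards `j₀` until the bag first changes, across an edge `de`. The hypothesis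
on `X` is needed at every node of the walk that still carries the bag `B`. -/
lemma IsTreeDecomp.exists_bag_ne_subset_inter_of_isPath (hdec : IsTreeDecomp G T bag)
    {X B : Set V} {j₀ : ι} (hXB : X ⊆ B) (hB : B ≠ bag j₀)
    (hX : ∀ c, bag c = B → ∀ v ∈ X, ∃ j, v ∈ bag j ∧ ¬ T.Separates c j j₀) :
    ∀ {c : ι} (p : T.Walk c j₀), p.IsPath → bag c = B →
      ∃ d e, bag d ≠ bag e ∧ X ⊆ bag d ∩ bag e
  | _, .nil, _, hc => (hB hc.symm).elim
  | c, .cons (v := c₁) hcc₁ q, hp, hc => by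
    rw [Walk.cons_isPath_iff] at hp
    by_cases hc₁ : bag c₁ = B
    · exact hdec.exists_bag_ne_subset_inter_of_isPath hXB hB hX q hp.1 hc₁
    refine ⟨c, c₁, hc ▸ Ne.symm hc₁, fun v hv => ⟨hc ▸ hXB hv, ?_⟩⟩
    obtain ⟨j, hvj, hj⟩ := hX c hc v hv
    have hc₁j : ¬ T.Separates c c₁ j :=
      not_separates_trans (not_separates_iff.mpr ⟨q, hp.2⟩) (separates_comm.not.mp hj)
    exact hdec.mem_bag_of_separates (hc ▸ hXB hv) hvj
      (hdec.1.isAcyclic.separates_of_adj hcc₁ hc₁j)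

lemma IsTreeDecomp.exists_bag_ne_gnbhd_inter_subset (hdec : IsTreeDecomp G T bag) {W : Set V}
    (hW : W.Nonempty) (hconn : ∀ u ∈ W, ∀ v ∈ W, (grestrict G W).Reachable u v) {c : ι}
    (hc : Disjoint W (bag c)) : ∃ d e, bag d ≠ bag e ∧ gnbhd G W ∩ bag c ⊆ bag d ∩ bag e := by
  classical
  obtain ⟨u₀, hu₀⟩ := hW
  obtain ⟨j₀, hj₀⟩ := hdec.2.1 u₀
  obtain ⟨p⟩ := hdec.1.connected.preconnected c j₀
  refine hdec.exists_bag_ne_subset_inter_of_isPath Set.inter_subset_right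
    (fun h => Set.disjoint_left.mp hc hu₀ (by rwa [h])) ?_ p.bypass p.bypass_isPath rfl
  rintro c' hc' v ⟨⟨-, u, hu, huv⟩, -⟩
  obtain ⟨j, huj, hvj⟩ := hdec.2.2.1 u v huv
  obtain ⟨q⟩ := hconn u hu u₀ hu₀
  exact ⟨j, hvj, hdec.not_separates_of_walk (hc' ▸ hc) q hu huj hj₀⟩

lemma IsTreeDecomp.gnbhd_eq_empty [Finite V] (hdec : IsTreeDecomp G T bag)
    (hw : ∀ i, (bag i).ncard ≤ 1) (C : Set V) : gnbhd G C = ∅ := by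
  refine Set.eq_empty_of_forall_notMem fun v ⟨_, u, _, huv⟩ => ?_
  obtain ⟨i, hui, hvi⟩ := hdec.2.2.1 u v huv
  have := (Set.one_lt_ncard_iff (Set.toFinite _)).mpr ⟨u, v, hui, hvi, huv.ne⟩
  exact (hw i).not_gt this

end TreeDecomp

lemma Set.ncard_inter_le_of_ne {α : Type*} [Finite α] {A B : Set α} {w : ℕ} (hne : A ≠ B)
    (hA : A.ncard ≤ w + 1) (hB : B.ncard ≤ w + 1) : (A ∩ B).ncard ≤ w := by
  by_cases hAB : A ⊆ B
  · have := Set.ncard_lt_ncard (Set.inter_eq_left.mpr hAB ▸ hAB.ssubset_of_ne hne)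
    omega
  · have := Set.ncard_lt_ncard (Set.inter_subset_left.ssubset_of_ne
      fun h => hAB (Set.inter_eq_left.mp h))
    omega

section Components

variable {G : SimpleGraph V}

lemma mem_of_gdelete_walk {A C : Set V} (hC : ∀ u ∈ C, ∀ v, (gdelete G A).Adj u v → v ∈ C)
    {u v : V} (p : (gdelete G A).Walk u v) (hu : u ∈ C) : v ∈ C := by
  induction p with
  | nil => exact hu
  | cons h _ ih => exact ih (hC _ hu _ h)

lemma reachable_grestrict_of_gdelete_walk {A C : Set V}
    (hC : ∀ u ∈ C, ∀ v, (gdelete G A).Adj u v → v ∈ C) {u v : V}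
    (p : (gdelete G A).Walk u v) (hu : u ∈ C) : (grestrict G C).Reachable u v := by
  induction p with
  | nil => rfl
  | cons h _ ih =>
    have hb := hC _ hu _ h
    exact (show (grestrict G C).Adj _ _ from
      ⟨h.1, Set.notMem_compl_iff.mpr hu, Set.notMem_compl_iff.mpr hb⟩).reachable.trans (ih hb)

lemma exists_isCompOf_mem {S : Set V} {a : V} (ha : a ∉ S) : ∃ C, IsCompOf G Sᶜ C ∧ a ∈ C := by
  let C := {v | (gdelete G S).Reachable a v}
  have hclosed : ∀ u ∈ C, ∀ v, (gdelete G S).Adj u v → v ∈ C := fun _ ⟨p⟩ _ h => ⟨p.concat h⟩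
  have hCS : C ⊆ Sᶜ := fun _ ⟨p⟩ => mem_of_gdelete_walk (fun _ _ _ h => h.2.2) p ha
  refine ⟨C, ⟨hCS, ⟨a, .rfl⟩, fun u ⟨p⟩ _ ⟨q⟩ => ?_, fun u hu v hv huv => ?_⟩, .rfl⟩
  · exact reachable_grestrict_of_gdelete_walk hclosed (p.reverse.append q) ⟨p⟩
  · exact hclosed u hu v ⟨huv, hCS hu, hv⟩

lemma IsCompOf.subset_of_mem {S S' C C' : Set V} (hC : IsCompOf G Sᶜ C) (hSS' : S ⊆ S')
    (hC' : IsCompOf G S'ᶜ C') {u : V} (huC' : u ∈ C') (huC : u ∈ C) : C' ⊆ C := fun v hv => by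
  obtain ⟨p⟩ := hC'.2.2.1 u huC' v hv
  refine mem_of_gdelete_walk (A := C'ᶜ) (fun x hx y hxy => hC.2.2.2 x hx y ?_ hxy.1) p huC
  exact Set.compl_subset_compl.mpr hSS' (hC'.1 (Set.notMem_compl_iff.mp hxy.2.2))

lemma IsCompOf.of_disjoint {S S' C C' : Set V} (hC : IsCompOf G Sᶜ C) (hSS' : S ⊆ S')
    (hS'C : S' ⊆ S ∪ C) (hC' : IsCompOf G S'ᶜ C') (hdisj : Disjoint C' C) :
    IsCompOf G Sᶜ C' ∧ gnbhd G C' ∩ S' ⊆ S := by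
  have hC'S : C' ⊆ Sᶜ := hC'.1.trans (Set.compl_subset_compl.mpr hSS')
  have hnbhd : ∀ u ∈ C', ∀ v ∈ S', G.Adj u v → v ∈ S := fun u hu v hv huv =>
    (hS'C hv).resolve_right fun hvC =>
      Set.disjoint_left.mp hdisj hu (hC.2.2.2 v hvC u (hC'S hu) huv.symm)
  refine ⟨⟨hC'S, hC'.2.1, hC'.2.2.1, fun u hu v hv huv => ?_⟩, ?_⟩
  · exact hC'.2.2.2 u hu v (fun hvS' => hv (hnbhd u hu v hvS' huv)) huv
  · rintro v ⟨⟨-, u, hu, huv⟩, hv⟩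
    exact hnbhd u hu v hv huv

end Components

section Covers

variable {ι : Type} {G : SimpleGraph V} {T : SimpleGraph ι} {bag : ι → Set V} {w : ℕ}

def CoveredByTwoBags (bag : ι → Set V) (w : ℕ) (X : Set V) : Prop :=
  ∃ t₁ t₂ : ι, ∃ A₁ ⊆ bag t₁, ∃ A₂ ⊆ bag t₂, A₁.ncard ≤ w ∧ A₂.ncard ≤ w ∧ X ⊆ A₁ ∪ A₂

lemma CoveredByTwoBags.mono {X Y : Set V} (h : CoveredByTwoBags bag w X) (hYX : Y ⊆ X) :
    CoveredByTwoBags bag w Y := by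
  obtain ⟨t₁, t₂, A₁, h₁, A₂, h₂, hw₁, hw₂, hX⟩ := h
  exact ⟨t₁, t₂, A₁, h₁, A₂, h₂, hw₁, hw₂, hYX.trans hX⟩

lemma CoveredByTwoBags.ncard_le [Finite V] {X : Set V} (h : CoveredByTwoBags bag w X) :
    X.ncard ≤ 2 * w := by
  obtain ⟨-, -, A₁, -, A₂, -, hw₁, hw₂, hX⟩ := h
  calc X.ncard ≤ (A₁ ∪ A₂).ncard := Set.ncard_le_ncard hX
    _ ≤ A₁.ncard + A₂.ncard := Set.ncard_union_le _ _
    _ ≤ 2 * w := by omega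

lemma IsTreeDecomp.coveredByTwoBags_of_disjoint [Finite V] (hdec : IsTreeDecomp G T bag)
    (hw : ∀ i, (bag i).ncard ≤ w + 1) {W X : Set V} (hW : W.Nonempty)
    (hconn : ∀ u ∈ W, ∀ v ∈ W, (grestrict G W).Reachable u v) {c : ι}
    (hc : Disjoint W (bag c)) {κ : Type*} {t : κ → ι} {A : κ → Set V}
    (hA : ∀ i, A i ⊆ bag (t i)) (hAw : ∀ i, (A i).ncard ≤ w)
    (hsep : Pairwise fun i k => T.Separates c (t i) (t k))
    (hXW : X ⊆ gnbhd G W) (hX : X ⊆ bag c ∪ ⋃ i, A i) : CoveredByTwoBags bag w X := by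
  obtain ⟨d, e, hde, hde'⟩ := hdec.exists_bag_ne_gnbhd_inter_subset hW hconn hc
  obtain ⟨u₀, hu₀⟩ := hW
  obtain ⟨j₀, hj₀⟩ := hdec.2.1 u₀
  have hY : X \ bag c ⊆ ⋃ i, A i := fun v hv => (hX hv.1).resolve_left hv.2
  have hside : ∀ i, ∀ v ∈ X \ bag c, v ∈ A i → ¬ T.Separates c (t i) j₀ := by
    rintro i v ⟨hvX, hvc⟩ hvi
    obtain ⟨-, u, hu, huv⟩ := hXW hvX
    obtain ⟨j, huj, hvj⟩ := hdec.2.2.1 u v huv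
    obtain ⟨q⟩ := hconn u hu u₀ hu₀
    exact not_separates_trans (fun h => hvc (hdec.mem_bag_of_separates (hA i hvi) hvj h))
      (hdec.not_separates_of_walk hc q hu huj hj₀)
  have hXc : X ⊆ bag d ∩ bag e ∪ X \ bag c := fun v hv => by
    by_cases hvc : v ∈ bag c
    · exact .inl (hde' ⟨hXW hv, hvc⟩)
    · exact .inr ⟨hv, hvc⟩
  have hinter : (bag d ∩ bag e).ncard ≤ w := Set.ncard_inter_le_of_ne hde (hw d) (hw e)
  rcases eq_empty_or_exists_subset_of_pairwise_separates hsep hY hside with hY₀ | ⟨i, hi⟩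
  · exact ⟨d, d, _, Set.inter_subset_left, ∅, Set.empty_subset _, hinter, by simp,
      by simpa [hY₀] using hXc⟩
  · exact ⟨d, t i, _, Set.inter_subset_left, A i, hA i, hinter, hAw i,
      hXc.trans (Set.union_subset_union_right _ hi)⟩

end Covers

section Construction

variable {ι : Type} {G : SimpleGraph V} {T : SimpleGraph ι} {bag : ι → Set V} {w : ℕ}

def NbhdsCoveredByTwoBags (G : SimpleGraph V) (bag : ι → Set V) (w : ℕ) (S : Set V) : Prop :=
  ∀ C, IsCompOf G Sᶜ C → CoveredByTwoBags bag w (gnbhd G C ∩ S)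

lemma IsTreeDecomp.nbhdsCoveredByTwoBags_empty (hdec : IsTreeDecomp G T bag) :
    NbhdsCoveredByTwoBags G bag w ∅ := fun _ hC => by
  obtain ⟨t, -⟩ := hdec.2.1 hC.2.1.some
  exact ⟨t, t, ∅, Set.empty_subset _, ∅, Set.empty_subset _, by simp, by simp, by simp⟩

lemma NbhdsCoveredByTwoBags.exists_insert [Finite V] (hdec : IsTreeDecomp G T bag)
    (hw : ∀ i, (bag i).ncard ≤ w + 1) (hw₀ : 0 < w) {S : Set V}
    (hS : NbhdsCoveredByTwoBags G bag w S) {a : V} (ha : a ∉ S) :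
    ∃ S', insert a S ⊆ S' ∧ S'.ncard ≤ S.ncard + 2 * (w + 1) ∧
      NbhdsCoveredByTwoBags G bag w S' := by
  obtain ⟨C, hC, haC⟩ := exists_isCompOf_mem (G := G) ha
  obtain ⟨t₁, t₂, A₁, hA₁, A₂, hA₂, hA₁w, hA₂w, hNC⟩ := hS C hC
  obtain ⟨ta, hta⟩ := hdec.2.1 a
  obtain ⟨c, h₁₂, h₁a, h₂a⟩ := hdec.1.exists_median t₁ t₂ ta
  refine ⟨S ∪ insert a (bag c ∩ C), ?_, ?_, fun C' hC' => ?_⟩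
  · rintro v (rfl | hv)
    exacts [.inr (.inl rfl), .inl hv]
  · have := (Set.ncard_le_ncard (Set.inter_subset_left (t := C))).trans (hw c)
    calc _ ≤ S.ncard + (insert a (bag c ∩ C)).ncard := Set.ncard_union_le _ _
      _ ≤ S.ncard + ((bag c ∩ C).ncard + 1) := by grw [Set.ncard_insert_le]
      _ ≤ S.ncard + 2 * (w + 1) := by omega
  by_cases hmeet : ∃ u ∈ C', u ∈ C
  · obtain ⟨u, huC', huC⟩ := hmeet
    have hC'C := hC.subset_of_mem Set.subset_union_left hC' huC' huC
    have hc : Disjoint C' (bag c) :=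
      Set.disjoint_left.mpr fun v hv hvc => hC'.1 hv (.inr (.inr ⟨hvc, hC'C hv⟩))
    refine hdec.coveredByTwoBags_of_disjoint hw hC'.2.1 hC'.2.2.1 hc
      (t := ![t₁, t₂, ta]) (A := ![A₁, A₂, {a}]) ?_ ?_ ?_ Set.inter_subset_left ?_
    · intro i; fin_cases i <;> simp [hA₁, hA₂, hta]
    · intro i; fin_cases i <;> simp [hA₁w, hA₂w, Nat.succ_le_of_lt hw₀]
    · intro i k hik; fin_cases i <;> fin_cases k <;> simp_all [separates_comm]
    · rintro v ⟨⟨hvC', u', hu', hu'v⟩, hvS | rfl | hvc⟩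
      · have hv : v ∈ gnbhd G C ∩ S := ⟨⟨fun hvC => hC.1 hvC hvS, u', hC'C hu', hu'v⟩, hvS⟩
        rcases hNC hv with hv₁ | hv₂
        exacts [.inr (Set.mem_iUnion.mpr ⟨0, hv₁⟩), .inr (Set.mem_iUnion.mpr ⟨1, hv₂⟩)]
      · exact .inr (Set.mem_iUnion.mpr ⟨2, rfl⟩)
      · exact .inl hvc.1
  · push Not at hmeet
    have hS'C : S ∪ insert a (bag c ∩ C) ⊆ S ∪ C := Set.union_subset_union_right _
      (Set.insert_subset haC Set.inter_subset_right)
    obtain ⟨hC'S, hsub⟩ := hC.of_disjoint Set.subset_union_left hS'C hC'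
      (Set.disjoint_left.mpr hmeet)
    exact (hS C' hC'S).mono fun v hv => ⟨hv.1, hsub hv⟩

lemma IsTreeDecomp.exists_superset_nbhdsCoveredByTwoBags [Finite V] (hdec : IsTreeDecomp G T bag)
    (hw : ∀ i, (bag i).ncard ≤ w + 1) (hw₀ : 0 < w) (S : Set V) :
    ∃ S', S ⊆ S' ∧ S'.ncard ≤ 2 * (w + 1) * S.ncard ∧ NbhdsCoveredByTwoBags G bag w S' := by
  induction S, S.toFinite using Set.Finite.induction_on with
  | empty => exact ⟨∅, subset_rfl, by simp, hdec.nbhdsCoveredByTwoBags_empty⟩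
  | @insert a S ha hS ih =>
    obtain ⟨S₀, hSS₀, hcard, hS₀⟩ := ih
    rw [Set.ncard_insert_of_notMem ha hS, mul_add_one]
    by_cases haS₀ : a ∈ S₀
    · exact ⟨S₀, Set.insert_subset haS₀ hSS₀, by omega, hS₀⟩
    obtain ⟨S', hS₀S', hcard', hS'⟩ := hS₀.exists_insert hdec hw hw₀ haS₀
    exact ⟨S', (Set.insert_subset_insert hSS₀).trans hS₀S', by omega, hS'⟩

end Construction

/-- protrusion partitioning: given a tree decomposition of `G` of
width `w` and `S ⊆ V(G)`, there is a superset `S' ⊇ S` of size at most `2(w+1)|S|` such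
that every connected component `C` of `G − S'` satisfies `|N_G(C) ∩ S'| ≤ 2w`. -/
theorem stmt3 [Fintype V] {ι : Type} (G : SimpleGraph V) (T : SimpleGraph ι)
    (bag : ι → Set V) (w : ℕ)
    (hT : IsTreeDecomp G T bag) (hw : ∀ i, (bag i).ncard ≤ w + 1) (S : Set V) :
    ∃ S' : Set V, S ⊆ S' ∧ S'.ncard ≤ 2 * (w + 1) * S.ncard ∧
      ∀ C : Set V, IsCompOf G S'ᶜ C → (gnbhd G C ∩ S').ncard ≤ 2 * w := by
  rcases Nat.eq_zero_or_pos w with rfl | hw₀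
  · refine ⟨S, subset_rfl, by omega, fun C _ => ?_⟩
    simp [hT.gnbhd_eq_empty hw C]
  · obtain ⟨S', hSS', hcard, hS'⟩ := hT.exists_superset_nbhdsCoveredByTwoBags hw hw₀ S
    exact ⟨S', hSS', hcard, fun C hC => (hS' C hC).ncard_le⟩
end

section
/- Let (G, L, f) be a labeled graph with a terminal vertex t ∈ V(G) and let S ⊆ V(G). Let J := L \ L(t, S) be the set of labels unreachable from t in G − S. Then there is an important (t, V_G(J))-separator S' such that |S'| ≤ |S| and L(t, S) = L(t, S'), i.e., S and S' separate exactly the same set of labels from t. -/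
/-!
A set `T` separates `t` from the vertices carrying a label outside `J` exactly when
`L(t, T) ⊆ J`. So an important separator whose reach contains `R(t, S)` reaches at least the
labels of `L(t, S)`, and, being a separator for `J = L(t, S)`, no others.
-/

set_option maxHeartbeats 1000000

variable {V : Type}

/-- `R_G(X, S)`: the set of vertices reachable from `X \ S` in `G − S`. -/
def greach (G : SimpleGraph V) (X S : Set V) : Set V :=
  {v | v ∉ S ∧ ∃ x ∈ X \ S, (gdelete G S).Reachable x v}

/-- `S` is an `(X,Y)`-separator: no vertex of `Y` is reachable from `X \ S` in `G − S`. -/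
def IsSep (G : SimpleGraph V) (X Y S : Set V) : Prop := Y ∩ greach G X S = ∅

/-- A minimal `(X,Y)`-separator: none of its proper subsets is an `(X,Y)`-separator. -/
def IsMinSep (G : SimpleGraph V) (X Y S : Set V) : Prop :=
  IsSep G X Y S ∧ ∀ S' ⊂ S, ¬ IsSep G X Y S'

/-- `S'` dominates `S`: `|S'| ≤ |S|` and `R_G(X, S) ⊊ R_G(X, S')`. -/
def SepDominates (G : SimpleGraph V) (X S' S : Set V) : Prop :=
  S'.ncard ≤ S.ncard ∧ greach G X S ⊂ greach G X S'

/-- An important `(X,Y)`-separator: minimal and dominated by no `(X,Y)`-separator. -/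
def IsImpSep (G : SimpleGraph V) (X Y S : Set V) : Prop :=
  IsMinSep G X Y S ∧ ¬ ∃ S', IsSep G X Y S' ∧ SepDominates G X S' S

/-- `L(t, S)`: the set of labels reachable from the terminal `t` in `G − S`,
for a labeling `f` of the vertices of `G` by sets of labels. -/
def reachLabels {L : Type} (G : SimpleGraph V) (f : V → Set L) (S : Set V) (t : V) :
    Set L :=
  ⋃ v ∈ greach G {t} S, f v

/-- `V_G(J)`: the vertices carrying at least one label from `J`. -/
def labelVerts {L : Type} (f : V → Set L) (J : Set L) : Set V := {v | (f v ∩ J).Nonempty}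

lemma gdelete_anti {G : SimpleGraph V} {S S' : Set V} (h : S ⊆ S') :
    gdelete G S' ≤ gdelete G S :=
  fun _ _ hadj => ⟨hadj.1, fun hu => hadj.2.1 (h hu), fun hv => hadj.2.2 (h hv)⟩

lemma greach_anti {G : SimpleGraph V} {X S S' : Set V} (h : S ⊆ S') :
    greach G X S' ⊆ greach G X S := by
  rintro v ⟨hv, x, hx, hxv⟩
  exact ⟨fun hvS => hv (h hvS), x, ⟨hx.1, fun hxS => hx.2 (h hxS)⟩,
    hxv.mono (gdelete_anti h)⟩

/-- Among the separators `T` with `|T| ≤ |S|` and `R(X, S) ⊆ R(X, T)`, one that maximises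
`|R(X, T)|` and, subject to that, minimises `|T|` is important. -/
theorem exists_isImpSep_of_isSep [Finite V] {G : SimpleGraph V} {X Y S : Set V}
    (hS : IsSep G X Y S) :
    ∃ S', IsImpSep G X Y S' ∧ S'.ncard ≤ S.ncard ∧ greach G X S ⊆ greach G X S' := by
  let C : Set (Set V) :=
    {T | IsSep G X Y T ∧ T.ncard ≤ S.ncard ∧ greach G X S ⊆ greach G X T}
  let score (T : Set V) : ℕ ×ₗ ℕᵒᵈ :=
    toLex ((greach G X T).ncard, OrderDual.toDual T.ncard)
  obtain ⟨T, ⟨hT, hTS, hST⟩, hmax⟩ :=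
    C.exists_max_image score C.toFinite ⟨S, hS, le_rfl, subset_rfl⟩
  have not_sep_of_score_lt {T'} (hT'T : T'.ncard ≤ T.ncard)
      (hreach : greach G X T ⊆ greach G X T') (hlt : score T < score T') : ¬ IsSep G X Y T' :=
    fun hT' => (hmax T' ⟨hT', hT'T.trans hTS, hST.trans hreach⟩).not_gt hlt
  refine ⟨T, ⟨⟨hT, fun T' hT'T => ?_⟩, ?_⟩, hTS, hST⟩
  · have hreach := greach_anti (G := G) (X := X) hT'T.subset
    have hcard := Set.ncard_lt_ncard hT'T T.toFinite
    refine not_sep_of_score_lt hcard.le hreach (Prod.Lex.toLex_lt_toLex.2 ?_)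
    rcases (Set.ncard_le_ncard hreach (Set.toFinite _)).lt_or_eq with hlt | heq
    · exact .inl hlt
    · exact .inr ⟨heq, OrderDual.toDual_lt_toDual.2 hcard⟩
  · rintro ⟨T', hT', hcard, hreach⟩
    exact not_sep_of_score_lt hcard hreach.subset
      (Prod.Lex.toLex_lt_toLex.2 (.inl (Set.ncard_lt_ncard hreach (Set.toFinite _)))) hT'

lemma isSep_labelVerts_compl_iff {L : Type} {G : SimpleGraph V} {f : V → Set L} {t : V}
    {J : Set L} {T : Set V} :
    IsSep G {t} (labelVerts f Jᶜ) T ↔ reachLabels G f T t ⊆ J := by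
  simp only [IsSep, reachLabels, labelVerts, Set.eq_empty_iff_forall_notMem,
    Set.iUnion₂_subset_iff, Set.mem_inter_iff, Set.mem_ofPred_eq, not_and,
    Set.inter_compl_nonempty_iff]
  exact forall_congr' fun _ => not_imp_not

lemma reachLabels_mono {L : Type} {G : SimpleGraph V} {f : V → Set L} {t : V} {S T : Set V}
    (h : greach G {t} S ⊆ greach G {t} T) : reachLabels G f S t ⊆ reachLabels G f T t :=
  Set.biUnion_subset_biUnion_left h

theorem stmt13_general [Fintype V] {L : Type} (G : SimpleGraph V)
    (f : V → Set L) (t : V) (S : Set V) :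
    ∃ S' : Set V,
      IsImpSep G {t} (labelVerts f ((reachLabels G f S t)ᶜ)) S' ∧
      S'.ncard ≤ S.ncard ∧
      reachLabels G f S t = reachLabels G f S' t := by
  obtain ⟨T, hT, hcard, hreach⟩ := exists_isImpSep_of_isSep
    (isSep_labelVerts_compl_iff.2 (le_refl (reachLabels G f S t)))
  exact ⟨T, hT, hcard, (reachLabels_mono hreach).antisymm
    (isSep_labelVerts_compl_iff.1 hT.1.1)⟩

/-- equivalent important separator: for any terminal `t` and any
`S ⊆ V(G)`, letting `J = L \ L(t, S)` be the labels unreachable from `t` in `G − S`,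
there is an important `({t}, V_G(J))`-separator `S'` with `|S'| ≤ |S|` and
`L(t, S) = L(t, S')`. -/
theorem stmt13 [Fintype V] {L : Type} [Fintype L] (G : SimpleGraph V)
    (f : V → Set L) (t : V) (S : Set V) :
    ∃ S' : Set V,
      IsImpSep G {t} (labelVerts f ((reachLabels G f S t)ᶜ)) S' ∧
      S'.ncard ≤ S.ncard ∧
      reachLabels G f S t = reachLabels G f S' t :=
  stmt13_general G f t S
end
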